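/- Collisions happen in finite time: if (m₁,m₂,m₃,ξ,p) is a solution of the reduced two-body system on [t₀, t*) with ξ(t) → +∞ as t → t*⁻, then t* < ∞. Equivalently, there is no solution defined on all of [t₀, ∞) along which ξ(t) → +∞ as t → ∞. -/

import Mathlib

/-!
Along a solution the angular momentum `L = m₁² + m₂² + m₃²` and the energy
`E = p² − m₁p + m₃²ξ² − m₂m₃ξ − ξ` are conserved. Suppose `ξ → +∞` as `t → ∞`, and look at
`G = (2p − m₁)/ξ`. Completing the square in `E` gives `(2p − m₁)² ≤ 4E + 4ξ + L`, so `G` stays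
bounded once `ξ ≥ 1`. On the other hand, since `ξ' = −(ξ² + 1)(2p − m₁)`, the numerator of `G'`
equals `2ξ³ + 2ξ + (m₂² − m₃²)ξ² + 2m₂m₃ξ + (ξ² + 1)(4E + m₁²)`, which dominates `ξ²` as soon as
`ξ ≥ 1 + 4L + 8|E|`. Then `G' ≥ 1`, so `G` grows linearly: a contradiction.
-/

open Filter Set

/-- The filter of approach `t → t*⁻`, where `t* ∈ ℝ ∪ {±∞}` is encoded as an `EReal`:
for finite `t*` this is `𝓝[<] t*`, and for `t* = ⊤` it is `atTop`. -/
noncomputable def approachFilter (tstar : EReal) : Filter ℝ :=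
  Filter.comap (fun t : ℝ => (t : EReal)) (nhdsWithin tstar (Set.Iio tstar))

lemma atTop_le_approachFilter_top : atTop ≤ approachFilter ⊤ := by
  rw [approachFilter, ← tendsto_iff_comap]
  refine tendsto_nhdsWithin_of_tendsto_nhds_of_eventually_within _ ?_
    (Eventually.of_forall EReal.coe_lt_top)
  exact EReal.tendsto_nhds_top_iff_real.2 fun x =>
    (eventually_gt_atTop x).mono fun _ => EReal.coe_lt_coe_iff.2

lemma eq_of_hasDerivAt_eq_zero_of_le {f : ℝ → ℝ} {a : ℝ} (hf : ∀ t, a ≤ t → HasDerivAt f 0 t)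
    {t : ℝ} (ht : a ≤ t) : f t = f a :=
  constant_of_has_deriv_right_zero (fun x hx => (hf x hx.1).continuousAt.continuousWithinAt)
    (fun x hx => (hf x hx.1).hasDerivWithinAt) t ⟨ht, le_rfl⟩

lemma tendsto_atTop_of_le_hasDerivAt {f : ℝ → ℝ} {a c : ℝ} (hc : 0 < c)
    (hf : ∀ t, a ≤ t → ∃ f', HasDerivAt f f' t ∧ c ≤ f') : Tendsto f atTop atTop := by
  choose f' hf' hcf' using hf
  have hgrowth : ∀ t, a ≤ t → c * (t - a) ≤ f t - f a := by
    intro t ht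
    refine (convex_Ici a).mul_sub_le_image_sub_of_le_deriv
      (fun x hx => (hf' x hx).continuousAt.continuousWithinAt)
      (fun x hx => (hf' x (interior_subset hx)).differentiableAt.differentiableWithinAt)
      (fun x hx => ?_) a self_mem_Ici t ht ht
    rw [(hf' x (interior_subset hx)).deriv]
    exact hcf' x _
  have hline : Tendsto (fun t => f a + c * (t - a)) atTop atTop :=
    tendsto_atTop_add_const_left _ _ <|
      (tendsto_atTop_add_const_right _ _ tendsto_id).const_mul_atTop hc
  exact tendsto_atTop_mono' _ ((eventually_ge_atTop a).mono fun t ht => by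
    linarith [hgrowth t ht]) hline

def angularMomentum (m1 m2 m3 : ℝ) : ℝ := m1 ^ 2 + m2 ^ 2 + m3 ^ 2

lemma angularMomentum_nonneg (m1 m2 m3 : ℝ) : 0 ≤ angularMomentum m1 m2 m3 := by
  unfold angularMomentum; positivity

def energy (m1 m2 m3 ξ p : ℝ) : ℝ := p ^ 2 - m1 * p + m3 ^ 2 * ξ ^ 2 - m2 * m3 * ξ - ξ

lemma sq_two_mul_sub_le (m1 m2 m3 ξ p : ℝ) :
    (2 * p - m1) ^ 2 ≤ 4 * energy m1 m2 m3 ξ p + 4 * ξ + angularMomentum m1 m2 m3 := by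
  unfold energy angularMomentum
  nlinarith [sq_nonneg (2 * m3 * ξ - m2), sq_nonneg m3]

lemma abs_two_mul_sub_div_le (m1 m2 m3 p : ℝ) {ξ : ℝ} (hξ : 1 ≤ ξ) :
    |(2 * p - m1) / ξ| ≤ √(4 * |energy m1 m2 m3 ξ p| + 4 + angularMomentum m1 m2 m3) := by
  refine Real.abs_le_sqrt ?_
  have hL := angularMomentum_nonneg m1 m2 m3
  have hE := le_abs_self (energy m1 m2 m3 ξ p)
  rw [div_pow, div_le_iff₀ (by positivity)]
  have hξ2 : 1 ≤ ξ ^ 2 := by nlinarith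
  nlinarith [sq_two_mul_sub_le m1 m2 m3 ξ p, mul_le_mul_of_nonneg_left hξ2 hL,
    mul_le_mul_of_nonneg_left hξ2 (abs_nonneg (energy m1 m2 m3 ξ p))]

structure IsReducedSolutionAt (m1 m2 m3 xi p : ℝ → ℝ) (t : ℝ) : Prop where
  hasDerivAt_m1 :
    HasDerivAt m1 (xi t * (-(m2 t)^2 + (m3 t)^2 + 2 * m2 t * m3 t * xi t)) t
  hasDerivAt_m2 :
    HasDerivAt m2 (m1 t * m2 t * xi t - m3 t * p t - 2 * m1 t * m3 t * (xi t)^2) t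
  hasDerivAt_m3 : HasDerivAt m3 (m2 t * p t - m1 t * m3 t * xi t) t
  hasDerivAt_xi : HasDerivAt xi (-((xi t)^2 + 1) * (2 * p t - m1 t)) t
  hasDerivAt_p :
    HasDerivAt p (-((xi t)^2 + 1) * (1 + m2 t * m3 t - 2 * (m3 t)^2 * xi t)) t

namespace IsReducedSolutionAt

variable {m1 m2 m3 xi p : ℝ → ℝ} {t : ℝ} (h : IsReducedSolutionAt m1 m2 m3 xi p t)
include h

lemma hasDerivAt_angularMomentum :
    HasDerivAt (fun s => angularMomentum (m1 s) (m2 s) (m3 s)) 0 t :=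
  (((h.hasDerivAt_m1.pow 2).add (h.hasDerivAt_m2.pow 2)).add
    (h.hasDerivAt_m3.pow 2)).congr_deriv (by ring)

lemma hasDerivAt_energy :
    HasDerivAt (fun s => energy (m1 s) (m2 s) (m3 s) (xi s) (p s)) 0 t :=
  (((((h.hasDerivAt_p.pow 2).sub (h.hasDerivAt_m1.mul h.hasDerivAt_p)).add
    ((h.hasDerivAt_m3.pow 2).mul (h.hasDerivAt_xi.pow 2))).sub
    ((h.hasDerivAt_m2.mul h.hasDerivAt_m3).mul h.hasDerivAt_xi)).sub
    h.hasDerivAt_xi).congr_deriv (by simp only [Pi.pow_apply, Pi.mul_apply]; ring)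

lemma exists_hasDerivAt_two_mul_sub_div_ge_one
    (hξ : 1 + 4 * angularMomentum (m1 t) (m2 t) (m3 t) +
      8 * |energy (m1 t) (m2 t) (m3 t) (xi t) (p t)| ≤ xi t) :
    ∃ g', HasDerivAt (fun s => (2 * p s - m1 s) / xi s) g' t ∧ 1 ≤ g' := by
  set L := angularMomentum (m1 t) (m2 t) (m3 t)
  set E := energy (m1 t) (m2 t) (m3 t) (xi t) (p t)
  have hL : 0 ≤ L := angularMomentum_nonneg _ _ _
  have hE := abs_nonneg E
  have hξ1 : 1 ≤ xi t := by linarith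
  refine ⟨_, ((h.hasDerivAt_p.const_mul 2).sub h.hasDerivAt_m1).div h.hasDerivAt_xi
    (by positivity), ?_⟩
  rw [one_le_div (by positivity), Pi.sub_apply]
  have hnumerator : (2 * (-((xi t)^2 + 1) * (1 + m2 t * m3 t - 2 * (m3 t)^2 * xi t)) -
        xi t * (-(m2 t)^2 + (m3 t)^2 + 2 * m2 t * m3 t * xi t)) * xi t -
      (2 * p t - m1 t) * (-((xi t)^2 + 1) * (2 * p t - m1 t)) =
      2 * xi t ^ 3 + 2 * xi t + (m2 t ^ 2 - m3 t ^ 2) * xi t ^ 2 + 2 * m2 t * m3 t * xi t +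
        ((xi t)^2 + 1) * (4 * E + m1 t ^ 2) := by
    unfold E energy; ring
  rw [hnumerator]
  have hm23 : m3 t ^ 2 - m2 t ^ 2 ≤ L ∧ -(2 * m2 t * m3 t) ≤ L := by
    unfold L angularMomentum
    constructor <;> nlinarith [sq_nonneg (m1 t), sq_nonneg (m2 t), sq_nonneg (m2 t + m3 t)]
  nlinarith [mul_le_mul_of_nonneg_right hm23.1 (sq_nonneg (xi t)),
    mul_le_mul_of_nonneg_right hm23.2 (by positivity : 0 ≤ xi t),
    mul_le_mul_of_nonneg_right (neg_abs_le E) (by positivity : 0 ≤ xi t ^ 2 + 1),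
    mul_nonneg (sq_nonneg (m1 t)) (by positivity : 0 ≤ xi t ^ 2 + 1),
    mul_le_mul_of_nonneg_right hξ (sq_nonneg (xi t)),
    mul_nonneg hL (by nlinarith : 0 ≤ xi t ^ 2 - xi t),
    mul_nonneg hE (by nlinarith : 0 ≤ xi t ^ 2 - 1)]

end IsReducedSolutionAt

theorem not_tendsto_atTop_of_isReducedSolutionAt {m1 m2 m3 xi p : ℝ → ℝ} {t0 : ℝ}
    (hsol : ∀ t, t0 ≤ t → IsReducedSolutionAt m1 m2 m3 xi p t) :
    ¬ Tendsto xi atTop atTop := by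
  intro hxi
  set L := angularMomentum (m1 t0) (m2 t0) (m3 t0)
  set E := energy (m1 t0) (m2 t0) (m3 t0) (xi t0) (p t0)
  have hL : ∀ t, t0 ≤ t → angularMomentum (m1 t) (m2 t) (m3 t) = L := fun t =>
    eq_of_hasDerivAt_eq_zero_of_le fun s hs => (hsol s hs).hasDerivAt_angularMomentum
  have hE : ∀ t, t0 ≤ t → energy (m1 t) (m2 t) (m3 t) (xi t) (p t) = E := fun t =>
    eq_of_hasDerivAt_eq_zero_of_le fun s hs => (hsol s hs).hasDerivAt_energy
  obtain ⟨T, hT⟩ := eventually_atTop.1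
    ((hxi.eventually_ge_atTop (1 + 4 * L + 8 * |E|)).and (eventually_ge_atTop t0))
  have hG : Tendsto (fun s => (2 * p s - m1 s) / xi s) atTop atTop :=
    tendsto_atTop_of_le_hasDerivAt one_pos fun t ht =>
      (hsol t (hT t ht).2).exists_hasDerivAt_two_mul_sub_div_ge_one
        (by rw [hL t (hT t ht).2, hE t (hT t ht).2]; exact (hT t ht).1)
  obtain ⟨t, hGt, hTt⟩ :=
    ((hG.eventually_gt_atTop √(4 * |E| + 4 + L)).and (eventually_ge_atTop T)).exists
  have hξ1 : 1 ≤ xi t := by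
    linarith [(hT t hTt).1, abs_nonneg E, angularMomentum_nonneg (m1 t0) (m2 t0) (m3 t0)]
  have hGbound := abs_two_mul_sub_div_le (m1 t) (m2 t) (m3 t) (p t) hξ1
  rw [hL t (hT t hTt).2, hE t (hT t hTt).2] at hGbound
  exact (hGt.trans_le (le_abs_self _)).not_ge hGbound

theorem collision_in_finite_time_general
    (t0 : ℝ) (tstar : EReal)
    (m1 m2 m3 xi p : ℝ → ℝ)
    (hm1 : ∀ t : ℝ, t0 ≤ t → (t : EReal) < tstar →
      HasDerivAt m1 (xi t * (-(m2 t)^2 + (m3 t)^2 + 2 * m2 t * m3 t * xi t)) t)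
    (hm2 : ∀ t : ℝ, t0 ≤ t → (t : EReal) < tstar →
      HasDerivAt m2 (m1 t * m2 t * xi t - m3 t * p t - 2 * m1 t * m3 t * (xi t)^2) t)
    (hm3 : ∀ t : ℝ, t0 ≤ t → (t : EReal) < tstar →
      HasDerivAt m3 (m2 t * p t - m1 t * m3 t * xi t) t)
    (hxi : ∀ t : ℝ, t0 ≤ t → (t : EReal) < tstar →
      HasDerivAt xi (-((xi t)^2 + 1) * (2 * p t - m1 t)) t)
    (hp : ∀ t : ℝ, t0 ≤ t → (t : EReal) < tstar →
      HasDerivAt p (-((xi t)^2 + 1) * (1 + m2 t * m3 t - 2 * (m3 t)^2 * xi t)) t)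
    (hcoll : Tendsto xi (approachFilter tstar) atTop) :
    tstar < ⊤ := by
  refine lt_top_iff_ne_top.2 fun htop => ?_
  subst htop
  have hsol : ∀ t, t0 ≤ t → IsReducedSolutionAt m1 m2 m3 xi p t := fun t ht =>
    ⟨hm1 t ht (EReal.coe_lt_top t), hm2 t ht (EReal.coe_lt_top t), hm3 t ht (EReal.coe_lt_top t),
      hxi t ht (EReal.coe_lt_top t), hp t ht (EReal.coe_lt_top t)⟩
  exact not_tendsto_atTop_of_isReducedSolutionAt hsol (hcoll.mono_left atTop_le_approachFilter_top)

/-- Collisions happen in finite time: if a solution of the reduced two-body system on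
`[t₀, t*)` satisfies `ξ(t) → +∞` as `t → t*⁻`, then `t* < ∞`.  (Equivalently, there is
no solution on all of `[t₀, ∞)` along which `ξ(t) → +∞` as `t → ∞`.) -/
theorem collision_in_finite_time
    (t0 : ℝ) (tstar : EReal) (ht0 : (t0 : EReal) < tstar)
    (m1 m2 m3 xi p : ℝ → ℝ)
    (hm1 : ∀ t : ℝ, t0 ≤ t → (t : EReal) < tstar →
      HasDerivAt m1 (xi t * (-(m2 t)^2 + (m3 t)^2 + 2 * m2 t * m3 t * xi t)) t)
    (hm2 : ∀ t : ℝ, t0 ≤ t → (t : EReal) < tstar →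
      HasDerivAt m2 (m1 t * m2 t * xi t - m3 t * p t - 2 * m1 t * m3 t * (xi t)^2) t)
    (hm3 : ∀ t : ℝ, t0 ≤ t → (t : EReal) < tstar →
      HasDerivAt m3 (m2 t * p t - m1 t * m3 t * xi t) t)
    (hxi : ∀ t : ℝ, t0 ≤ t → (t : EReal) < tstar →
      HasDerivAt xi (-((xi t)^2 + 1) * (2 * p t - m1 t)) t)
    (hp : ∀ t : ℝ, t0 ≤ t → (t : EReal) < tstar →
      HasDerivAt p (-((xi t)^2 + 1) * (1 + m2 t * m3 t - 2 * (m3 t)^2 * xi t)) t)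
    (hcoll : Tendsto xi (approachFilter tstar) atTop) :
    tstar < ⊤ :=
  collision_in_finite_time_general t0 tstar m1 m2 m3 xi p hm1 hm2 hm3 hxi hp hcoll
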